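/- Let n be a positive natural number and E = ℝ^n with the Euclidean inner product. Let H and P be Borel probability measures on E with finite second moment, let m be a real number with 0 < m < 1/2, let G = (1−m)·H + m·P, and set Δ = μ_H − μ_P. Suppose H and P each have covariance bounded by φ². If v is a unit vector with ∫ ⟨x − μ_G, v⟩² dG(x) ≥ m(1−m)‖Δ‖₂² (in particular, any unit vector achieving the top eigenvalue of the covariance of G when Δ ≠ 0), then the alignment bound ⟨Δ, v⟩² ≥ ‖Δ‖₂² − φ²/(m(1−m)) holds. -/

import Mathlib

/-!
Law of total variance along `v`: the variance of the mixture in direction `v` is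
`(1 - m) Var_H + m Var_P + m (1 - m) ⟪Δ, v⟫²`, and the within-component part is at most `φ²`.
Hence `m (1 - m) ‖Δ‖² ≤ φ² + m (1 - m) ⟪Δ, v⟫²`; divide by `m (1 - m) > 0`.
-/

open MeasureTheory RealInnerProductSpace

/-- The mean of a measure on Euclidean space. -/
noncomputable def mean {n : ℕ} (ν : Measure (EuclideanSpace ℝ (Fin n))) :
    EuclideanSpace ℝ (Fin n) :=
  ∫ x, x ∂ν

/-- The mixture measure `(1 - m) • H + m • P`. -/
noncomputable def mixture {n : ℕ} (m : ℝ) (H P : Measure (EuclideanSpace ℝ (Fin n))) :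
    Measure (EuclideanSpace ℝ (Fin n)) :=
  ENNReal.ofReal (1 - m) • H + ENNReal.ofReal m • P

open ProbabilityTheory

lemma integral_sub_const_sq {Ω : Type*} [MeasurableSpace Ω] {μ : Measure Ω}
    [IsProbabilityMeasure μ] {X : Ω → ℝ} (hX : MemLp X 2 μ) (c : ℝ) :
    ∫ ω, (X ω - c) ^ 2 ∂μ = Var[X; μ] + (μ[X] - c) ^ 2 := by
  have h := variance_eq_sub (hX.sub (memLp_const c))
  rw [show X - (fun _ => c) = fun ω => X ω - c from rfl,
    variance_sub_const hX.aestronglyMeasurable,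
    integral_sub (hX.integrable one_le_two) (integrable_const c)] at h
  simp only [Pi.pow_apply, integral_const, probReal_univ, smul_eq_mul, one_mul] at h
  linarith

section

variable {n : ℕ}

lemma memLp_two_id_of_integrable_norm_sq {ν : Measure (EuclideanSpace ℝ (Fin n))}
    (h2 : Integrable (fun x => ‖x‖ ^ 2) ν) : MemLp id 2 ν :=
  (memLp_two_iff_integrable_sq_norm measurable_id.aestronglyMeasurable).2 h2

lemma integral_inner_eq_inner_mean {ν : Measure (EuclideanSpace ℝ (Fin n))}
    [IsFiniteMeasure ν] (h2 : Integrable (fun x => ‖x‖ ^ 2) ν) (v : EuclideanSpace ℝ (Fin n)) :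
    ∫ x, ⟪x, v⟫ ∂ν = ⟪mean ν, v⟫ := by
  simp_rw [real_inner_comm v]
  exact integral_inner ((memLp_two_id_of_integrable_norm_sq h2).integrable one_le_two) v

lemma integral_inner_sub_sq {ν : Measure (EuclideanSpace ℝ (Fin n))} [IsProbabilityMeasure ν]
    (h2 : Integrable (fun x => ‖x‖ ^ 2) ν) (c v : EuclideanSpace ℝ (Fin n)) :
    ∫ x, ⟪x - c, v⟫ ^ 2 ∂ν = ∫ x, ⟪x - mean ν, v⟫ ^ 2 ∂ν + ⟪mean ν - c, v⟫ ^ 2 := by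
  have hX : MemLp (fun x => ⟪x, v⟫) 2 ν := (memLp_two_id_of_integrable_norm_sq h2).inner_const v
  have hmean := integral_inner_eq_inner_mean h2 v
  simp_rw [inner_sub_left]
  rw [integral_sub_const_sq hX, integral_sub_const_sq hX, hmean, sub_self]
  ring

lemma integral_mixture (H P : Measure (EuclideanSpace ℝ (Fin n))) {m : ℝ} (hm0 : 0 ≤ m)
    (hm1 : m ≤ 1) {F : Type*} [NormedAddCommGroup F] [NormedSpace ℝ F]
    {f : EuclideanSpace ℝ (Fin n) → F} (hfH : Integrable f H) (hfP : Integrable f P) :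
    ∫ x, f x ∂(mixture m H P) = (1 - m) • ∫ x, f x ∂H + m • ∫ x, f x ∂P := by
  rw [mixture, integral_add_measure (hfH.smul_measure (by simp)) (hfP.smul_measure (by simp)),
    integral_smul_measure, integral_smul_measure,
    ENNReal.toReal_ofReal (sub_nonneg.2 hm1), ENNReal.toReal_ofReal hm0]

lemma mean_mixture {H P : Measure (EuclideanSpace ℝ (Fin n))} [IsFiniteMeasure H]
    [IsFiniteMeasure P] (hH2 : Integrable (fun x => ‖x‖ ^ 2) H)
    (hP2 : Integrable (fun x => ‖x‖ ^ 2) P) {m : ℝ} (hm0 : 0 ≤ m) (hm1 : m ≤ 1) :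
    mean (mixture m H P) = (1 - m) • mean H + m • mean P :=
  integral_mixture H P hm0 hm1
    ((memLp_two_id_of_integrable_norm_sq hH2).integrable one_le_two)
    ((memLp_two_id_of_integrable_norm_sq hP2).integrable one_le_two)

lemma integral_inner_sub_mean_mixture_sq {H P : Measure (EuclideanSpace ℝ (Fin n))}
    [IsProbabilityMeasure H] [IsProbabilityMeasure P] (hH2 : Integrable (fun x => ‖x‖ ^ 2) H)
    (hP2 : Integrable (fun x => ‖x‖ ^ 2) P) {m : ℝ} (hm0 : 0 ≤ m) (hm1 : m ≤ 1)
    (v : EuclideanSpace ℝ (Fin n)) :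
    ∫ x, ⟪x - mean (mixture m H P), v⟫ ^ 2 ∂(mixture m H P) =
      (1 - m) * ∫ x, ⟪x - mean H, v⟫ ^ 2 ∂H + m * ∫ x, ⟪x - mean P, v⟫ ^ 2 ∂P
        + m * (1 - m) * ⟪mean H - mean P, v⟫ ^ 2 := by
  set c := mean (mixture m H P)
  have hsq {ν : Measure (EuclideanSpace ℝ (Fin n))} [IsFiniteMeasure ν]
      (h2 : Integrable (fun x => ‖x‖ ^ 2) ν) : Integrable (fun x => ⟪x - c, v⟫ ^ 2) ν :=
    (((memLp_two_id_of_integrable_norm_sq h2).sub (memLp_const c)).inner_const v).integrable_sq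
  have hc : c = (1 - m) • mean H + m • mean P := mean_mixture hH2 hP2 hm0 hm1
  have hHc : mean H - c = m • (mean H - mean P) := by rw [hc]; module
  have hPc : mean P - c = (m - 1) • (mean H - mean P) := by rw [hc]; module
  rw [integral_mixture H P hm0 hm1 (hsq hH2) (hsq hP2), integral_inner_sub_sq hH2,
    integral_inner_sub_sq hP2, hHc, hPc, real_inner_smul_left, real_inner_smul_left]
  simp only [smul_eq_mul]
  ring

end

theorem top_eigenvector_alignment_general {n : ℕ}
    (H P : Measure (EuclideanSpace ℝ (Fin n)))
    [IsProbabilityMeasure H] [IsProbabilityMeasure P]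
    (hH2 : Integrable (fun x => ‖x‖ ^ 2) H) (hP2 : Integrable (fun x => ‖x‖ ^ 2) P)
    (m : ℝ) (hm0 : 0 < m) (hm1 : m < 1 / 2) (φ : ℝ)
    (hHcov : ∀ u : EuclideanSpace ℝ (Fin n), ‖u‖ = 1 →
      ∫ x, ⟪x - mean H, u⟫ ^ 2 ∂H ≤ φ ^ 2)
    (hPcov : ∀ u : EuclideanSpace ℝ (Fin n), ‖u‖ = 1 →
      ∫ x, ⟪x - mean P, u⟫ ^ 2 ∂P ≤ φ ^ 2)
    (v : EuclideanSpace ℝ (Fin n)) (hv : ‖v‖ = 1)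
    (hvar : (∫ x, ⟪x - mean (mixture m H P), v⟫ ^ 2 ∂(mixture m H P)) ≥
      m * (1 - m) * ‖mean H - mean P‖ ^ 2) :
    ⟪mean H - mean P, v⟫ ^ 2 ≥ ‖mean H - mean P‖ ^ 2 - φ ^ 2 / (m * (1 - m)) := by
  have hm_le_one : m ≤ 1 := by linarith
  rw [integral_inner_sub_mean_mixture_sq hH2 hP2 hm0.le hm_le_one v] at hvar
  have hwithin : (1 - m) * ∫ x, ⟪x - mean H, v⟫ ^ 2 ∂H + m * ∫ x, ⟪x - mean P, v⟫ ^ 2 ∂P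
      ≤ φ ^ 2 := by
    have := mul_le_mul_of_nonneg_left (hHcov v hv) (sub_nonneg.2 hm_le_one)
    have := mul_le_mul_of_nonneg_left (hPcov v hv) hm0.le
    linarith
  have hpos : 0 < m * (1 - m) := mul_pos hm0 (by linarith)
  have hgap : ‖mean H - mean P‖ ^ 2 - ⟪mean H - mean P, v⟫ ^ 2 ≤ φ ^ 2 / (m * (1 - m)) := by
    rw [le_div_iff₀ hpos]
    linarith
  linarith

theorem top_eigenvector_alignment {n : ℕ} (hn : 0 < n)
    (H P : Measure (EuclideanSpace ℝ (Fin n)))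
    [IsProbabilityMeasure H] [IsProbabilityMeasure P]
    (hH2 : Integrable (fun x => ‖x‖ ^ 2) H) (hP2 : Integrable (fun x => ‖x‖ ^ 2) P)
    (m : ℝ) (hm0 : 0 < m) (hm1 : m < 1 / 2) (φ : ℝ)
    (hHcov : ∀ u : EuclideanSpace ℝ (Fin n), ‖u‖ = 1 →
      ∫ x, ⟪x - mean H, u⟫ ^ 2 ∂H ≤ φ ^ 2)
    (hPcov : ∀ u : EuclideanSpace ℝ (Fin n), ‖u‖ = 1 →
      ∫ x, ⟪x - mean P, u⟫ ^ 2 ∂P ≤ φ ^ 2)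
    (v : EuclideanSpace ℝ (Fin n)) (hv : ‖v‖ = 1)
    (hvar : (∫ x, ⟪x - mean (mixture m H P), v⟫ ^ 2 ∂(mixture m H P)) ≥
      m * (1 - m) * ‖mean H - mean P‖ ^ 2) :
    ⟪mean H - mean P, v⟫ ^ 2 ≥ ‖mean H - mean P‖ ^ 2 - φ ^ 2 / (m * (1 - m)) :=
  top_eigenvector_alignment_general H P hH2 hP2 m hm0 hm1 φ hHcov hPcov v hv hvar
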